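/- If w is not divisible by p (with p ≥ 2), then for the state |ψ⟩ = (1/√q)(∑_{i=0}^{q-2} |i⟩^{⊗n} + e^{2πi·w/p} |q−1⟩^{⊗n}), the squared overlap with |GHZ_{q,n}^0⟩ satisfies |⟨GHZ_{q,n}^0|ψ⟩|² ≤ 1 − (1 − cos(2π/p))/q. -/

import Mathlib

open Finset

/-- |GHZ_{q,n}^0⟩ = (1/√q) ∑_j |j⟩^{⊗n}, as a vector in ℂ^{(Fin n → Fin q)}. -/
noncomputable def GHZ0 (q n : ℕ) : (Fin n → Fin q) → ℂ :=
  fun x => (Real.sqrt q : ℂ)⁻¹ * ∑ j : Fin q, (if x = fun _ => j then 1 else 0)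

/-- |ψ⟩ = (1/√q)(∑_{i=0}^{q-2} |i⟩^{⊗n} + e^{2πiw/p} |q−1⟩^{⊗n}). -/
noncomputable def psiState (q n p : ℕ) (w : ℤ) : (Fin n → Fin q) → ℂ :=
  fun x => (Real.sqrt q : ℂ)⁻¹ *
    ∑ j : Fin q,
      (if (j : ℕ) = q - 1 then Complex.exp (2 * Real.pi * Complex.I * w / p) else 1) *
        (if x = fun _ => j then 1 else 0)

lemma cos_aux (p : ℕ) (hp : 2 ≤ p) (k : ℤ) (hk1 : 1 ≤ k) (h2 : 2 * k ≤ p) :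
    Real.cos (2 * Real.pi * k / p) ≤ Real.cos (2 * Real.pi / p) := by
  have hp0 : (0:ℝ) < p := by positivity
  have hpi := Real.pi_pos
  have hk0 : (1:ℝ) ≤ (k:ℝ) := by exact_mod_cast hk1
  have h2' : 2 * (k:ℝ) ≤ p := by exact_mod_cast h2
  apply Real.cos_le_cos_of_nonneg_of_le_pi
  · positivity
  · rw [div_le_iff₀ hp0]; nlinarith
  · rw [div_le_div_iff₀ hp0 hp0]
    nlinarith [mul_nonneg (mul_nonneg (by linarith : (0:ℝ) ≤ (k:ℝ)-1) hp0.le) hpi.le]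

lemma cos_key (p : ℕ) (hp : 2 ≤ p) (w : ℤ) (hw : ¬ (p : ℤ) ∣ w) :
    Real.cos (2 * Real.pi * w / p) ≤ Real.cos (2 * Real.pi / p) := by
  have hp0 : (0:ℝ) < p := by positivity
  have hpz : (0:ℤ) < p := by positivity
  set k : ℤ := w % p with hk
  set d : ℤ := w / p with hd
  have hk0 : 0 ≤ k := Int.emod_nonneg w (by positivity)
  have hkp : k < p := Int.emod_lt_of_pos w hpz
  have hkne : k ≠ 0 := fun h => hw ((Int.dvd_iff_emod_eq_zero).mpr h)
  have hk1 : 1 ≤ k := lt_of_le_of_ne hk0 (Ne.symm hkne)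
  have hsplit : (w:ℝ) = k + p * d := by
    have : (w:ℤ) = k + p * d := by
      have h := Int.mul_ediv_add_emod w p
      simp only [hk, hd]
      omega
    exact_mod_cast congrArg (Int.cast : ℤ → ℝ) this
  have harg : 2 * Real.pi * w / p = 2 * Real.pi * k / p + d * (2 * Real.pi) := by
    rw [hsplit]; field_simp
  rw [harg, Real.cos_add_int_mul_two_pi]
  rcases le_or_gt (2 * k) p with h2 | h2
  · exact cos_aux p hp k hk1 h2
  · have heq : Real.cos (2 * Real.pi * k / p) = Real.cos (2 * Real.pi * ((p:ℝ) - k) / p) := by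
      have h3 : 2 * Real.pi * ((p:ℝ) - k) / p = 2 * Real.pi - 2 * Real.pi * k / p := by
        field_simp
      rw [h3, Real.cos_sub]; simp
    rw [heq]
    have := cos_aux p hp ((p:ℤ) - k) (by omega) (by omega)
    push_cast at this
    exact this



lemma sum_key (q n p : ℕ) (hq : 2 ≤ q) (hn : 1 ≤ n) (w : ℤ) :
    (∑ x : Fin n → Fin q, (starRingEnd ℂ) (GHZ0 q n x) * psiState q n p w x)
      = (q:ℂ)⁻¹ * ((q - 1) + Complex.exp (2 * Real.pi * Complex.I * w / p)) := by
  have hq0 : (0:ℝ) < q := by positivity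
  have hinj : ∀ j j' : Fin q, ((fun _ : Fin n => j) = fun _ => j') ↔ j = j' := by
    intro j j'
    constructor
    · intro h; exact congrFun h ⟨0, hn⟩
    · rintro rfl; rfl
  set c : Fin q → ℂ := fun j =>
    (if (j : ℕ) = q - 1 then Complex.exp (2 * Real.pi * Complex.I * w / p) else 1) with hc
  have step1 : ∀ x : Fin n → Fin q,
      (starRingEnd ℂ) (GHZ0 q n x) * psiState q n p w x
        = (q:ℂ)⁻¹ * ∑ j : Fin q, (if x = fun _ => j then c j else 0) := by
    intro x
    unfold GHZ0 psiState
    rw [map_mul, map_sum]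
    simp only [map_inv₀, Complex.conj_ofReal, apply_ite, map_one, map_zero, mul_ite,
      mul_one, mul_zero]
    rw [mul_mul_mul_comm]
    have hsq : ((Real.sqrt q : ℂ))⁻¹ * ((Real.sqrt q : ℂ))⁻¹ = (q:ℂ)⁻¹ := by
      rw [← mul_inv, ← Complex.ofReal_mul, Real.mul_self_sqrt hq0.le]
      push_cast
      ring
    rw [hsq]
    congr 1
    rw [Finset.sum_mul_sum]
    rw [Finset.sum_comm]
    have key : ∀ j' : Fin q, ∑ j : Fin q,
        (if x = fun _ => j then (1:ℂ) else 0) * (if x = fun _ => j' then c j' else 0)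
        = (if x = fun _ => j' then c j' else 0) := by
      intro j'
      by_cases hx : x = fun _ => j'
      · rw [Finset.sum_eq_single j']
        · simp [hx]
        · intro b _ hb
          have hxb : x ≠ fun _ => b := by
            rw [hx]; intro h; exact hb ((hinj _ _).mp h.symm)
          simp [hxb]
        · intro h; simp at h
      · simp only [if_neg hx, mul_zero, Finset.sum_const_zero]
    exact Finset.sum_congr rfl fun j' _ => key j'
  rw [Finset.sum_congr rfl (fun x _ => step1 x), ← Finset.mul_sum]
  congr 1
  rw [Finset.sum_comm]
  have hcard : ∀ j : Fin q, ∑ x : Fin n → Fin q, (if x = fun _ => j then c j else 0) = c j := by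
    intro j
    rw [Finset.sum_eq_single (fun _ => j)]
    · simp
    · intro b _ hb; simp [hb]
    · intro h; simp at h
  rw [Finset.sum_congr rfl (fun j _ => hcard j)]
  -- now ∑ j, c j = (q-1) + exp
  have hdecomp : ∀ j : Fin q, c j = 1 + (if j = (⟨q-1, by omega⟩ : Fin q)
      then Complex.exp (2 * Real.pi * Complex.I * w / p) - 1 else 0) := by
    intro j
    have : (j : ℕ) = q - 1 ↔ j = (⟨q-1, by omega⟩ : Fin q) := by
      constructor
      · intro h; exact Fin.ext h
      · rintro rfl; rfl
    simp only [hc, this]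
    by_cases h : j = (⟨q-1, by omega⟩ : Fin q) <;> simp [h]
  rw [Finset.sum_congr rfl (fun j _ => hdecomp j), Finset.sum_add_distrib]
  simp [Finset.card_univ]
  ring

theorem GHZ_overlap_not_divisible (q n p : ℕ) (hq : 2 ≤ q) (hn : 1 ≤ n) (hp : 2 ≤ p)
    (w : ℤ) (hw : ¬ (p : ℤ) ∣ w) :
    ‖∑ x : Fin n → Fin q,
        (starRingEnd ℂ) (GHZ0 q n x) * psiState q n p w x‖ ^ 2
      ≤ 1 - (1 - Real.cos (2 * Real.pi / p)) / q := by
  have hq0 : (0:ℝ) < q := by positivity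
  have hq2 : (2:ℝ) ≤ q := by exact_mod_cast hq
  rw [sum_key q n p hq hn w]
  set θ : ℝ := 2 * Real.pi * w / p with hθ
  have hexp : Complex.exp (2 * Real.pi * Complex.I * w / p) = Complex.exp ((θ:ℂ) * Complex.I) := by
    rw [hθ]
    push_cast
    ring
  rw [hexp]
  set c : ℝ := Real.cos θ with hcdef
  set s : ℝ := Real.sin θ with hsdef
  set c₀ : ℝ := Real.cos (2 * Real.pi / p) with hc0def
  have hcc0 : c ≤ c₀ := cos_key p hp w hw
  have hc01 : c₀ ≤ 1 := Real.cos_le_one _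
  have hpyth : s ^ 2 + c ^ 2 = 1 := Real.sin_sq_add_cos_sq θ
  have habs : ‖(q:ℂ)⁻¹ * ((q - 1) + Complex.exp ((θ:ℂ) * Complex.I))‖ ^ 2
      = ((q - 1 + c) ^ 2 + s ^ 2) / q ^ 2 := by
    rw [norm_mul, mul_pow, norm_inv, Complex.norm_natCast, Complex.sq_norm]
    have hre : (((q:ℂ) - 1) + Complex.exp ((θ:ℂ) * Complex.I)).re = q - 1 + c := by
      simp [Complex.exp_ofReal_mul_I_re, hcdef]
    have him : (((q:ℂ) - 1) + Complex.exp ((θ:ℂ) * Complex.I)).im = s := by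
      simp [Complex.exp_ofReal_mul_I_im, hsdef]
    rw [Complex.normSq_apply, hre, him]
    field_simp
  rw [habs, div_le_iff₀ (by positivity : (0:ℝ) < q ^ 2)]
  have hrhs : (1 - (1 - c₀) / q) * q ^ 2 = q ^ 2 - (1 - c₀) * q := by
    field_simp
  rw [hrhs]
  nlinarith [mul_nonneg (by linarith : (0:ℝ) ≤ (q:ℝ) - 2) (by linarith : (0:ℝ) ≤ 1 - c₀),
    mul_nonneg (by linarith : (0:ℝ) ≤ (q:ℝ) - 1) (by linarith : (0:ℝ) ≤ c₀ - c)]
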